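/- Let a ∈ ℝ \ {0,1} and â, ĉ₀, ĉ₁, f̂, ĥ₀, ĥ₁ ∈ ℝ. Set g₀ = ĉ₀, f₀ = −ĥ₀, g₁ = ĉ₁, f₁ = −ĥ₁, g₂ = f₂ = 0, g₃ = â − ĉ₀ − ĉ₁, f₃ = ĥ₀ + ĥ₁ − f̂, g₄ = −a·g₃, f₄ = −a·f₃, and define R(t) = g₀(t−1)²(t−a)² + g₁t²(t−a)² + g₂t²(t−1)² + g₃t²(t−1)(t−a) + g₄t(t−1)(t−a), S(t) = f₀(t−1)²(t−a)² + f₁t²(t−a)² + f₂t²(t−1)² + f₃t²(t−1)(t−a) + f₄t(t−1)(t−a), and H(t) = ât² + (ĉ₁−ĉ₀−â)t + ĉ₀. Then R(t) = (t−a)²·H(t) and S(t) = −(t−a)²·(f̂t² + (ĥ₁−ĥ₀−f̂)t + ĥ₀) for all t ∈ ℝ, and moreover, with G(t) = 3t² − 2(a+1)t + a and Δ = (â−ĉ₀−ĉ₁)² − 4ĉ₀ĉ₁, for every real y ∉ {0,1,a} with H(y) ≠ 0: (y²(y−1)²(y−a)²/R(y)²)·[ R''(y) + (G(y)R'(y)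 − 2R(y)G'(y))/(y(y−1)(y−a)) + R(y)G(y)²/(y²(y−1)²(y−a)²) − (5/4)·R'(y)²/R(y) ] − S(y)/R(y) = (y²(1−y)²/H(y)²)·[ â + (â + (ĉ₁−ĉ₀)(2y−1))/(y(y−1)) − (5/4)·Δ/H(y) ] + (f̂·y(y−1) + ĥ₀(1−y) + ĥ₁y + 1)/H(y). -/

import Mathlib

/-- The numerator polynomial `R` of the Heun-class Bose invariant. -/
def heunR (a g₀ g₁ g₂ g₃ g₄ : ℝ) : ℝ → ℝ := fun t =>
  g₀ * (t - 1) ^ 2 * (t - a) ^ 2 + g₁ * t ^ 2 * (t - a) ^ 2 + g₂ * t ^ 2 * (t - 1) ^ 2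
    + g₃ * t ^ 2 * (t - 1) * (t - a) + g₄ * t * (t - 1) * (t - a)

/-- The polynomial `S` of the Heun-class Bose invariant. -/
def heunS (a f₀ f₁ f₂ f₃ f₄ : ℝ) : ℝ → ℝ := fun t =>
  f₀ * (t - 1) ^ 2 * (t - a) ^ 2 + f₁ * t ^ 2 * (t - a) ^ 2 + f₂ * t ^ 2 * (t - 1) ^ 2
    + f₃ * t ^ 2 * (t - 1) * (t - a) + f₄ * t * (t - 1) * (t - a)

/-- `G(t) = 3t² − 2(a+1)t + a`. -/
def heunG (a : ℝ) : ℝ → ℝ := fun t => 3 * t ^ 2 - 2 * (a + 1) * t + a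

/-- Natanzon's quadratic `H(t) = ât² + (ĉ₁−ĉ₀−â)t + ĉ₀`. -/
def natanzonH (ah c₀ c₁ : ℝ) : ℝ → ℝ := fun t => ah * t ^ 2 + (c₁ - c₀ - ah) * t + c₀

/-!
With the stated parameters `R = (t - a)² H` and `S = -(t - a)² (f̂t² + (ĥ₁ - ĥ₀ - f̂)t + ĥ₀)`.
For `R = (t - a)² H` with an arbitrary `H`, all dependence on `y - a` cancels from the Heun
expression, which becomes a rational function of `y`, `H`, `H'`, `H''`. For Natanzon's quadratic
`H` one has `H'' = 2â`, and `H'² - 4âH` is the constant discriminant `Δ`; this gives Natanzon's form.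
-/

theorem natanzonH_eq (ah c₀ c₁ t : ℝ) :
    natanzonH ah c₀ c₁ t = ah * t * (t - 1) + c₀ * (1 - t) + c₁ * t := by
  simp only [natanzonH]; ring

theorem hasDerivAt_natanzonH (ah c₀ c₁ t : ℝ) :
    HasDerivAt (natanzonH ah c₀ c₁) (2 * ah * t + (c₁ - c₀ - ah)) t :=
  (((((hasDerivAt_id' t).fun_pow 2).const_mul ah).fun_add
    ((hasDerivAt_id' t).const_mul (c₁ - c₀ - ah))).add_const c₀).congr_deriv (by ring)

theorem deriv_heunG (a : ℝ) : deriv (heunG a) = fun t => 6 * t - 2 * (a + 1) := by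
  funext t
  exact (((((hasDerivAt_id' t).fun_pow 2).const_mul 3).fun_sub
    ((hasDerivAt_id' t).const_mul (2 * (a + 1)))).add_const a).deriv.trans (by ring)

theorem heunR_eq_sq_mul_natanzonH (a ah c₀ c₁ : ℝ) :
    heunR a c₀ c₁ 0 (ah - c₀ - c₁) (-a * (ah - c₀ - c₁))
      = fun t => (t - a) ^ 2 * natanzonH ah c₀ c₁ t := by
  funext t; simp only [heunR, natanzonH]; ring

theorem heunS_eq_neg_sq_mul_natanzonH (a fh h₀ h₁ : ℝ) :
    heunS a (-h₀) (-h₁) 0 (h₀ + h₁ - fh) (-a * (h₀ + h₁ - fh))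
      = fun t => -((t - a) ^ 2 * natanzonH fh h₀ h₁ t) := by
  funext t; simp only [heunS, natanzonH]; ring

section SqSubMul

variable {a : ℝ} {H H' : ℝ → ℝ}

theorem deriv_sq_sub_mul (hH : ∀ t, HasDerivAt H (H' t) t) :
    deriv (fun t => (t - a) ^ 2 * H t) = fun t => 2 * (t - a) * H t + (t - a) ^ 2 * H' t := by
  funext t
  exact ((((hasDerivAt_id' t).sub_const a).fun_pow 2).fun_mul (hH t)).deriv.trans
    (by push_cast; ring)

theorem deriv_deriv_sq_sub_mul (hH : ∀ t, HasDerivAt H (H' t) t) {H'' y : ℝ}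
    (hH' : HasDerivAt H' H'' y) :
    deriv (deriv (fun t => (t - a) ^ 2 * H t)) y
      = 2 * H y + 4 * (y - a) * H' y + (y - a) ^ 2 * H'' := by
  rw [deriv_sq_sub_mul hH]
  have hw := (hasDerivAt_id' y).sub_const a
  exact (((hw.const_mul 2).fun_mul (hH y)).fun_add ((hw.fun_pow 2).fun_mul hH')).deriv.trans
    (by push_cast; ring)

theorem heun_bracket_sq_sub_mul (hH : ∀ t, HasDerivAt H (H' t) t) {H'' y : ℝ}
    (hH' : HasDerivAt H' H'' y) (hy0 : y ≠ 0) (hy1 : y ≠ 1) (hya : y ≠ a) (hHy : H y ≠ 0) :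
    let R := fun t => (t - a) ^ 2 * H t
    (y ^ 2 * (y - 1) ^ 2 * (y - a) ^ 2 / (R y) ^ 2) *
        (deriv (deriv R) y
          + (heunG a y * deriv R y - 2 * R y * deriv (heunG a) y) / (y * (y - 1) * (y - a))
          + R y * (heunG a y) ^ 2 / (y ^ 2 * (y - 1) ^ 2 * (y - a) ^ 2)
          - (5 / 4) * (deriv R y) ^ 2 / R y)
      = (H'' * (y * (y - 1)) ^ 2 * H y + y * (y - 1) * (2 * y - 1) * H y * H' y
          - (5 / 4) * (y * (y - 1)) ^ 2 * H' y ^ 2) / H y ^ 3 + 1 / H y := by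
  intro R
  rw [deriv_deriv_sq_sub_mul hH hH', deriv_sq_sub_mul hH, deriv_heunG]
  have hy1' : y - 1 ≠ 0 := sub_ne_zero.mpr hy1
  have hya' : y - a ≠ 0 := sub_ne_zero.mpr hya
  simp only [R, heunG]
  field_simp
  ring

end SqSubMul

theorem natanzon_bracket_eq (ah c₀ c₁ : ℝ) {y : ℝ} (hy0 : y ≠ 0) (hy1 : y ≠ 1)
    (hH : natanzonH ah c₀ c₁ y ≠ 0) :
    let H := natanzonH ah c₀ c₁ y
    let H' := 2 * ah * y + (c₁ - c₀ - ah)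
    (y ^ 2 * (1 - y) ^ 2 / H ^ 2) *
        (ah + (ah + (c₁ - c₀) * (2 * y - 1)) / (y * (y - 1))
          - (5 / 4) * ((ah - c₀ - c₁) ^ 2 - 4 * c₀ * c₁) / H)
      = (2 * ah * (y * (y - 1)) ^ 2 * H + y * (y - 1) * (2 * y - 1) * H * H'
          - (5 / 4) * (y * (y - 1)) ^ 2 * H' ^ 2) / H ^ 3 := by
  intro H H'
  have hdisc : (ah - c₀ - c₁) ^ 2 - 4 * c₀ * c₁ = H' ^ 2 - 4 * ah * H := by
    simp only [H, H', natanzonH]; ring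
  have hlin : ah + (c₁ - c₀) * (2 * y - 1) = (2 * y - 1) * H' - 4 * ah * (y * (y - 1)) := by
    simp only [H']; ring
  have hH0 : H ≠ 0 := hH
  have hy1' : y - 1 ≠ 0 := sub_ne_zero.mpr hy1
  rw [hdisc, hlin]
  field_simp
  ring

theorem stmt_14_general (a : ℝ)
    (ah ch₀ ch₁ fh hh₀ hh₁ : ℝ)
    (g₀ g₁ g₂ g₃ g₄ f₀ f₁ f₂ f₃ f₄ : ℝ)
    (hg₀ : g₀ = ch₀) (hf₀ : f₀ = -hh₀) (hg₁ : g₁ = ch₁) (hf₁ : f₁ = -hh₁)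
    (hg₂ : g₂ = 0) (hf₂ : f₂ = 0) (hg₃ : g₃ = ah - ch₀ - ch₁)
    (hf₃ : f₃ = hh₀ + hh₁ - fh) (hg₄ : g₄ = -a * g₃) (hf₄ : f₄ = -a * f₃) :
    (∀ t : ℝ, heunR a g₀ g₁ g₂ g₃ g₄ t = (t - a) ^ 2 * natanzonH ah ch₀ ch₁ t) ∧
    (∀ t : ℝ, heunS a f₀ f₁ f₂ f₃ f₄ t
      = -((t - a) ^ 2 * (fh * t ^ 2 + (hh₁ - hh₀ - fh) * t + hh₀))) ∧
    ∀ y : ℝ, y ≠ 0 → y ≠ 1 → y ≠ a → natanzonH ah ch₀ ch₁ y ≠ 0 →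
      (y ^ 2 * (y - 1) ^ 2 * (y - a) ^ 2 / (heunR a g₀ g₁ g₂ g₃ g₄ y) ^ 2) *
            (deriv (deriv (heunR a g₀ g₁ g₂ g₃ g₄)) y
              + (heunG a y * deriv (heunR a g₀ g₁ g₂ g₃ g₄) y
                  - 2 * heunR a g₀ g₁ g₂ g₃ g₄ y * deriv (heunG a) y)
                / (y * (y - 1) * (y - a))
              + heunR a g₀ g₁ g₂ g₃ g₄ y * (heunG a y) ^ 2
                / (y ^ 2 * (y - 1) ^ 2 * (y - a) ^ 2)
              - (5 / 4) * (deriv (heunR a g₀ g₁ g₂ g₃ g₄) y) ^ 2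
                / heunR a g₀ g₁ g₂ g₃ g₄ y)
          - heunS a f₀ f₁ f₂ f₃ f₄ y / heunR a g₀ g₁ g₂ g₃ g₄ y
        = (y ^ 2 * (1 - y) ^ 2 / (natanzonH ah ch₀ ch₁ y) ^ 2) *
            (ah + (ah + (ch₁ - ch₀) * (2 * y - 1)) / (y * (y - 1))
              - (5 / 4) * ((ah - ch₀ - ch₁) ^ 2 - 4 * ch₀ * ch₁) / natanzonH ah ch₀ ch₁ y)
          + (fh * y * (y - 1) + hh₀ * (1 - y) + hh₁ * y + 1) / natanzonH ah ch₀ ch₁ y := by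
  subst hg₀ hg₁ hg₂ hg₃ hg₄ hf₀ hf₁ hf₂ hf₃ hf₄
  rw [heunR_eq_sq_mul_natanzonH, heunS_eq_neg_sq_mul_natanzonH]
  refine ⟨fun t => rfl, fun t => rfl, fun y hy0 hy1 hya hH => ?_⟩
  have hH' : HasDerivAt (fun t => 2 * ah * t + (g₁ - g₀ - ah)) (2 * ah) y :=
    ((hasDerivAt_id' y).const_mul (2 * ah)).add_const _ |>.congr_deriv (mul_one _)
  have hS : -((y - a) ^ 2 * natanzonH fh hh₀ hh₁ y) / ((y - a) ^ 2 * natanzonH ah g₀ g₁ y)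
      = -(natanzonH fh hh₀ hh₁ y / natanzonH ah g₀ g₁ y) := by
    rw [neg_div, mul_div_mul_left _ _ (pow_ne_zero 2 (sub_ne_zero.mpr hya))]
  rw [heun_bracket_sq_sub_mul (hasDerivAt_natanzonH ah g₀ g₁) hH' hy0 hy1 hya hH, hS,
    natanzon_bracket_eq ah g₀ g₁ hy0 hy1 hH, natanzonH_eq fh hh₀ hh₁ y]
  ring

/-- Natanzon's class of potentials is a subclass of the Heun-class
potentials under the stated substitution of parameters. -/
theorem stmt_14 (a : ℝ) (ha0 : a ≠ 0) (ha1 : a ≠ 1)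
    (ah ch₀ ch₁ fh hh₀ hh₁ : ℝ)
    (g₀ g₁ g₂ g₃ g₄ f₀ f₁ f₂ f₃ f₄ : ℝ)
    (hg₀ : g₀ = ch₀) (hf₀ : f₀ = -hh₀) (hg₁ : g₁ = ch₁) (hf₁ : f₁ = -hh₁)
    (hg₂ : g₂ = 0) (hf₂ : f₂ = 0) (hg₃ : g₃ = ah - ch₀ - ch₁)
    (hf₃ : f₃ = hh₀ + hh₁ - fh) (hg₄ : g₄ = -a * g₃) (hf₄ : f₄ = -a * f₃) :
    (∀ t : ℝ, heunR a g₀ g₁ g₂ g₃ g₄ t = (t - a) ^ 2 * natanzonH ah ch₀ ch₁ t) ∧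
    (∀ t : ℝ, heunS a f₀ f₁ f₂ f₃ f₄ t
      = -((t - a) ^ 2 * (fh * t ^ 2 + (hh₁ - hh₀ - fh) * t + hh₀))) ∧
    ∀ y : ℝ, y ≠ 0 → y ≠ 1 → y ≠ a → natanzonH ah ch₀ ch₁ y ≠ 0 →
      (y ^ 2 * (y - 1) ^ 2 * (y - a) ^ 2 / (heunR a g₀ g₁ g₂ g₃ g₄ y) ^ 2) *
            (deriv (deriv (heunR a g₀ g₁ g₂ g₃ g₄)) y
              + (heunG a y * deriv (heunR a g₀ g₁ g₂ g₃ g₄) y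
                  - 2 * heunR a g₀ g₁ g₂ g₃ g₄ y * deriv (heunG a) y)
                / (y * (y - 1) * (y - a))
              + heunR a g₀ g₁ g₂ g₃ g₄ y * (heunG a y) ^ 2
                / (y ^ 2 * (y - 1) ^ 2 * (y - a) ^ 2)
              - (5 / 4) * (deriv (heunR a g₀ g₁ g₂ g₃ g₄) y) ^ 2
                / heunR a g₀ g₁ g₂ g₃ g₄ y)
          - heunS a f₀ f₁ f₂ f₃ f₄ y / heunR a g₀ g₁ g₂ g₃ g₄ y
        = (y ^ 2 * (1 - y) ^ 2 / (natanzonH ah ch₀ ch₁ y) ^ 2) *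
            (ah + (ah + (ch₁ - ch₀) * (2 * y - 1)) / (y * (y - 1))
              - (5 / 4) * ((ah - ch₀ - ch₁) ^ 2 - 4 * ch₀ * ch₁) / natanzonH ah ch₀ ch₁ y)
          + (fh * y * (y - 1) + hh₀ * (1 - y) + hh₁ * y + 1) / natanzonH ah ch₀ ch₁ y :=
  stmt_14_general a ah ch₀ ch₁ fh hh₀ hh₁ g₀ g₁ g₂ g₃ g₄ f₀ f₁ f₂ f₃ f₄ hg₀ hf₀ hg₁ hf₁ hg₂ hf₂ hg₃
    hf₃ hg₄ hf₄
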